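/- arXiv:1602.04602 — 2 statements merged into one kernel-verified Lean document; each statement's English description precedes it below -/
import Mathlib

section
/- Let φ be an invertible linear operator on a finite-dimensional complex vector space U, and let T : U → U be an involution (T² = Id) anticommuting with φ (Tφ = -φT). Let W⁺ and W⁻ be the +1 and -1 eigenspaces of T. If every eigenvalue of φ² has multiplicity exactly two, then the restriction of φ² to W⁺ has only simple eigenvalues, and likewise for W⁻. -/
/-!
Since `φ` anticommutes with `T`, it maps the `ε`-eigenspace of `T` injectively into the
`(-ε)`-eigenspace; since it commutes with `φ²`, it preserves each eigenspace `E` of `φ²`.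
Hence `E ∩ W⁺` embeds into `E ∩ W⁻` (and likewise with signs swapped), and these two
subspaces of `E` meet trivially, so `2 · dim (E ∩ W^±) ≤ dim E ≤ 2`.
-/

open Module Module.End

namespace Module.End

variable {R M : Type*} [CommRing R] [AddCommGroup M] [Module R M]

theorem map_eigenspace_le_eigenspace_neg_of_anticomm {φ T : End R M}
    (hanti : T * φ = -(φ * T)) (ε : R) :
    (T.eigenspace ε).map φ ≤ T.eigenspace (-ε) := by
  rintro _ ⟨v, hv, rfl⟩
  rw [SetLike.mem_coe, mem_eigenspace_iff] at hv
  rw [mem_eigenspace_iff, ← mul_apply, hanti, LinearMap.neg_apply, mul_apply, hv, map_smul, neg_smul]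

theorem map_eigenspace_pow_le (φ : End R M) (n : ℕ) (μ : R) :
    ((φ ^ n).eigenspace μ).map φ ≤ (φ ^ n).eigenspace μ :=
  Submodule.map_le_iff_le_comap.mpr fun _ hv ↦
    mapsTo_genEigenspace_of_comm ((Commute.refl φ).pow_left n) μ 1 hv

theorem disjoint_eigenspace [IsDomain R] [IsTorsionFree R M] (f : End R M) {μ₁ μ₂ : R}
    (hμ : μ₁ ≠ μ₂) : Disjoint (f.eigenspace μ₁) (f.eigenspace μ₂) :=
  f.disjoint_genEigenspace hμ 1 1

end Module.End

section

variable {K V : Type*} [Field K] [AddCommGroup V] [Module K V] [FiniteDimensional K V]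

theorem two_mul_finrank_inf_eigenspace_le_of_anticomm {φ T : End K V}
    (hφ : Function.Injective φ) (hanti : T * φ = -(φ * T)) {E : Submodule K V}
    (hE : E.map φ ≤ E) {ε : K} (hε : ε ≠ -ε) :
    2 * finrank K (E ⊓ T.eigenspace ε : Submodule K V) ≤ finrank K E := by
  set S := E ⊓ T.eigenspace ε
  set S' := E ⊓ T.eigenspace (-ε)
  have hmap : S.map φ ≤ S' :=
    (Submodule.map_inf_le φ).trans
      (inf_le_inf hE (map_eigenspace_le_eigenspace_neg_of_anticomm hanti ε))
  have hle : finrank K S ≤ finrank K S' :=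
    (LinearEquiv.finrank_eq (S.equivMapOfInjective φ hφ)).le.trans (Submodule.finrank_mono hmap)
  have hdisj : S ⊓ S' = ⊥ :=
    (T.disjoint_eigenspace hε).mono inf_le_right inf_le_right |>.eq_bot
  have hsum : finrank K S + finrank K S' ≤ finrank K E := by
    rw [← Submodule.finrank_sup_add_finrank_inf_eq, hdisj, finrank_bot, add_zero]
    exact Submodule.finrank_mono (sup_le inf_le_left inf_le_left)
  omega

theorem finrank_eigenspace_le_of_forall_mem_spectrum {f : End K V} {n : ℕ}
    (h : ∀ μ ∈ spectrum K f, finrank K (f.eigenspace μ) = n) (μ : K) :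
    finrank K (f.eigenspace μ) ≤ n := by
  by_cases hμ : μ ∈ spectrum K f
  · exact (h μ hμ).le
  · rw [← hasEigenvalue_iff_mem_spectrum, hasEigenvalue_iff, not_not] at hμ
    rw [hμ, finrank_bot]
    exact n.zero_le

end

theorem stmt5_general {U : Type*} [AddCommGroup U] [Module ℂ U] [FiniteDimensional ℂ U]
    (φ T : Module.End ℂ U) (hφ : IsUnit φ)
    (hanti : T * φ = -(φ * T))
    (hmult : ∀ μ : ℂ, μ ∈ spectrum ℂ (φ ^ 2) →
      Module.finrank ℂ (Module.End.eigenspace (φ ^ 2) μ) = 2) :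
    (∀ μ : ℂ, Module.finrank ℂ
        (Module.End.eigenspace (φ ^ 2) μ ⊓ Module.End.eigenspace T 1 : Submodule ℂ U) ≤ 1) ∧
    (∀ μ : ℂ, Module.finrank ℂ
        (Module.End.eigenspace (φ ^ 2) μ ⊓ Module.End.eigenspace T (-1) : Submodule ℂ U) ≤ 1) := by
  have hinj : Function.Injective φ := ((Module.End.isUnit_iff φ).mp hφ).injective
  have key : ∀ ε : ℂ, ε ≠ -ε → ∀ μ : ℂ,
      finrank ℂ ((φ ^ 2).eigenspace μ ⊓ T.eigenspace ε : Submodule ℂ U) ≤ 1 := by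
    intro ε hε μ
    have := two_mul_finrank_inf_eigenspace_le_of_anticomm hinj hanti
      (map_eigenspace_pow_le φ 2 μ) hε
    have := finrank_eigenspace_le_of_forall_mem_spectrum hmult μ
    omega
  exact ⟨key 1 (by norm_num), key (-1) (by norm_num)⟩

/-- If `φ` is an invertible operator anticommuting with an involution `T`, and every
eigenvalue of `φ²` has multiplicity exactly two, then the restriction of `φ²` to each
of the `±1`-eigenspaces `W⁺`, `W⁻` of `T` has only simple eigenvalues. -/
theorem stmt5 {U : Type*} [AddCommGroup U] [Module ℂ U] [FiniteDimensional ℂ U]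
    (φ T : Module.End ℂ U) (hφ : IsUnit φ)
    (hT : T * T = 1) (hanti : T * φ = -(φ * T))
    (hdiag : (⨆ μ : ℂ, Module.End.eigenspace (φ ^ 2) μ) = ⊤)
    (hmult : ∀ μ : ℂ, μ ∈ spectrum ℂ (φ ^ 2) →
      Module.finrank ℂ (Module.End.eigenspace (φ ^ 2) μ) = 2) :
    (∀ μ : ℂ, Module.finrank ℂ
        (Module.End.eigenspace (φ ^ 2) μ ⊓ Module.End.eigenspace T 1 : Submodule ℂ U) ≤ 1) ∧
    (∀ μ : ℂ, Module.finrank ℂ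
        (Module.End.eigenspace (φ ^ 2) μ ⊓ Module.End.eigenspace T (-1) : Submodule ℂ U) ≤ 1) :=
  stmt5_general φ T hφ hanti hmult
end

section
/- For the irreducible SU(2)-representation V_m on homogeneous polynomials of degree m, the Casimir-type operator -((ρ_*)(H)² + (ρ_*)(A)² + (ρ_*)(B)²) equals m(m+2)·Id, where H = [[i,0],[0,-i]], A = [[0,i],[i,0]], B = [[0,-1],[1,0]] ∈ su(2). -/
/-!
Write `E = z₁∂₁ + z₂∂₂` for the Euler operator. The three generators act as
`ρ_*(H) = i(z₁∂₁ - z₂∂₂)`, `ρ_*(A) = i(z₂∂₁ + z₁∂₂)` and `ρ_*(B) = z₂∂₁ - z₁∂₂`, and since the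
partial derivatives commute, `-(ρ_*(H)² + ρ_*(A)² + ρ_*(B)²) = E² + 2E` as differential operators
on all polynomials. By Euler's identity `E` acts on `V_m` as the scalar `m`.
-/

open MvPolynomial

/-- The derived action of a matrix `X` in the Lie algebra `su(2) ⊂ M₂(ℂ)` on complex
polynomials in two variables `z₁, z₂` induced by the right action
`(ρ(x)v)(z) = v(z·x)`: explicitly `(ρ_* X) = (X₀₀z₁ + X₁₀z₂)∂₁ + (X₀₁z₁ + X₁₁z₂)∂₂`. -/
noncomputable def act (M : Matrix (Fin 2) (Fin 2) ℂ)
    (p : MvPolynomial (Fin 2) ℂ) : MvPolynomial (Fin 2) ℂ :=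
  (C (M 0 0) * X 0 + C (M 1 0) * X 1) * pderiv 0 p
    + (C (M 0 1) * X 0 + C (M 1 1) * X 1) * pderiv 1 p

namespace MvPolynomial

variable {σ R : Type*} [CommRing R]

theorem pderiv_pderiv_comm (i j : σ) (p : MvPolynomial σ R) :
    pderiv i (pderiv j p) = pderiv j (pderiv i p) := by
  classical
  have hcomm : ⁅pderiv (R := R) i, pderiv (R := R) j⁆ = 0 := by
    refine derivation_ext fun k => ?_
    rw [Derivation.commutator_apply, pderiv_X, pderiv_X]
    by_cases hik : i = k <;> by_cases hjk : j = k <;> simp [hik, hjk]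
  simpa [Derivation.commutator_apply, sub_eq_zero] using congr($hcomm p)

variable [Fintype σ]

noncomputable def eulerOperator : MvPolynomial σ R →ₗ[R] MvPolynomial σ R :=
  ∑ i, LinearMap.mulLeft R (X i) ∘ₗ (pderiv i).toLinearMap

theorem eulerOperator_apply (p : MvPolynomial σ R) :
    eulerOperator p = ∑ i, X i * pderiv i p := by
  simp [eulerOperator]

theorem IsHomogeneous.eulerOperator_eq {n : ℕ} {p : MvPolynomial σ R} (h : p.IsHomogeneous n) :
    eulerOperator p = n • p := by
  rw [eulerOperator_apply, h.sum_X_mul_pderiv]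

end MvPolynomial

theorem neg_casimir_eq_eulerOperator (q : MvPolynomial (Fin 2) ℂ) :
    -(act !![Complex.I, 0; 0, -Complex.I] (act !![Complex.I, 0; 0, -Complex.I] q)
      + act !![0, Complex.I; Complex.I, 0] (act !![0, Complex.I; Complex.I, 0] q)
      + act !![0, -1; 1, 0] (act !![0, -1; 1, 0] q))
      = eulerOperator (eulerOperator q) + 2 • eulerOperator q := by
  have hI : (C Complex.I : MvPolynomial (Fin 2) ℂ) * C Complex.I = -1 := by
    rw [← map_mul, Complex.I_mul_I, map_neg, map_one]
  simp only [act, Fin.isValue, Matrix.of_apply, Matrix.cons_val', Matrix.cons_val_zero,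
    Matrix.cons_val_fin_one, Matrix.cons_val_one, C_0, zero_mul, add_zero, neg_mul,
    zero_add, map_add, Derivation.leibniz, smul_eq_mul, pderiv_X, Pi.single_eq_same, mul_one,
    derivation_C, mul_zero, map_neg, ne_eq, one_ne_zero, not_false_eq_true, Pi.single_eq_of_ne,
    zero_ne_one, neg_add_rev, C_1, one_mul, neg_neg, eulerOperator_apply, Fin.sum_univ_two,
    smul_add, nsmul_eq_mul, Nat.cast_ofNat]
  rw [pderiv_pderiv_comm 1 0]
  -- the `H` and `A` terms carry the factor `i² = -1`; this coefficient collects them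
  linear_combination (-2 * (X 0 * pderiv 0 q + X 1 * pderiv 1 q)
    - (X 0 ^ 2 + X 1 ^ 2) * (pderiv 0 (pderiv 0 q) + pderiv 1 (pderiv 1 q))) * hI

/-- On the space `V_m` of homogeneous polynomials of degree `m`, the Casimir-type
operator `-(ρ_*(H)² + ρ_*(A)² + ρ_*(B)²)` acts as the scalar `m(m+2)`, where
`H = [[i,0],[0,-i]]`, `A = [[0,i],[i,0]]`, `B = [[0,-1],[1,0]]`. -/
theorem stmt13 (m : ℕ) (p : MvPolynomial (Fin 2) ℂ) (hp : p.IsHomogeneous m)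
    (H A B : Matrix (Fin 2) (Fin 2) ℂ)
    (hH : H = !![Complex.I, 0; 0, -Complex.I])
    (hA : A = !![0, Complex.I; Complex.I, 0])
    (hB : B = !![0, -1; 1, 0]) :
    -(act H (act H p) + act A (act A p) + act B (act B p))
      = ((m * (m + 2) : ℕ) : ℂ) • p := by
  subst hH hA hB
  rw [neg_casimir_eq_eulerOperator, hp.eulerOperator_eq, map_nsmul, hp.eulerOperator_eq,
    smul_smul, smul_smul, ← add_smul, Nat.cast_smul_eq_nsmul]
  ring_nf
end
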